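/- Let (X,T) be a non-trivial weakly mixing system and n ≥ 2. Then (X,T) is broken F_ps-n-sensitive if and only if (X,T) has at least n minimal points. -/

import Mathlib

open Filter Topology MeasureTheory

variable {X : Type} [MetricSpace X]

def orbit (T : X → X) (x : X) : Set X := Set.range fun n : ℕ => T^[n] x

def IsTransitiveSys (T : X → X) : Prop :=
  ∀ U V : Set X, IsOpen U → U.Nonempty → IsOpen V → V.Nonempty →
    {n : ℕ | (U ∩ T^[n] ⁻¹' V).Nonempty}.Infinite

def MinimalPoint (T : X → X) (x : X) : Prop :=
  ∀ y ∈ closure (orbit T x), x ∈ closure (orbit T y)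

def MinimalSys (T : X → X) : Prop := ∀ x : X, Dense (orbit T x)

def IsMinimalSubset (T : X → X) (M : Set X) : Prop :=
  M.Nonempty ∧ IsClosed M ∧ Set.MapsTo T M M ∧
    ∀ M' ⊆ M, M'.Nonempty → IsClosed M' → Set.MapsTo T M' M' → M' = M

noncomputable def ubd (F : Set ℕ) : ℝ :=
  Filter.limsup (fun N : ℕ => ⨆ m : ℕ, ((F ∩ Set.Ico m (m + N)).ncard : ℝ) / N) atTop

noncomputable def lbd (F : Set ℕ) : ℝ :=
  Filter.liminf (fun N : ℕ => ⨅ m : ℕ, ((F ∩ Set.Ico m (m + N)).ncard : ℝ) / N) atTop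

def Syndetic (F : Set ℕ) : Prop := ∃ N : ℕ, ∀ k : ℕ, ∃ j ∈ F, k ≤ j ∧ j ≤ k + N

def Thick (F : Set ℕ) : Prop := ∀ l : ℕ, ∃ m : ℕ, Set.Icc m (m + l) ⊆ F

def PiecewiseSyndetic (F : Set ℕ) : Prop := ∃ A B : Set ℕ, Thick A ∧ Syndetic B ∧ F = A ∩ B

def Fps : Set (Set ℕ) := {F | PiecewiseSyndetic F}
def Fpubd : Set (Set ℕ) := {F | 0 < ubd F}
def Finf : Set (Set ℕ) := {F | F.Infinite}

def FursFamily (S : Set (Set ℕ)) : Prop := ∀ F₁ F₂ : Set ℕ, F₁ ⊆ F₂ → F₁ ∈ S → F₂ ∈ S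

def FamRecurrent {Z : Type} [MetricSpace Z] (S : Set (Set ℕ)) (T : Z → Z) (x : Z) : Prop :=
  ∀ U : Set Z, IsOpen U → x ∈ U → {n : ℕ | T^[n] x ∈ U} ∈ S

def BrokenSensitive (T : X → X) (S : Set (Set ℕ)) (n : ℕ) : Prop :=
  ∃ δ > (0:ℝ), ∃ F₀ ∈ S, ∀ U : Set X, IsOpen U → U.Nonempty → ∀ l : ℕ,
    ∃ x : Fin n → X, (∀ i, x i ∈ U) ∧ ∃ m : ℕ,
      ∀ k ∈ F₀ ∩ Set.Icc 1 l, ∀ i j : Fin n, i ≠ j →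
        δ < dist (T^[m + k] (x i)) (T^[m + k] (x j))

def SensitiveTuple (T : X → X) {n : ℕ} (x : Fin n → X) : Prop :=
  ∀ U : Set X, IsOpen U → U.Nonempty →
    ∀ V : Fin n → Set X, (∀ i, IsOpen (V i) ∧ x i ∈ V i) →
      ∃ y : Fin n → X, (∀ i, y i ∈ U) ∧ ∃ m : ℕ, ∀ i, T^[m] (y i) ∈ V i

def EssentialSensitiveTuple (T : X → X) {n : ℕ} (x : Fin n → X) : Prop :=
  Function.Injective x ∧ SensitiveTuple T x

def prodMap (T : X → X) (n : ℕ) : (Fin n → X) → Fin n → X := fun x i => T (x i)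

def BlockilyThickly (T : X → X) (n : ℕ) : Prop :=
  ∃ δ > (0:ℝ), ∀ k : ℕ, ∀ U : Set X, IsOpen U → U.Nonempty →
    ∃ x : Fin n → X, (∀ i, x i ∈ U) ∧ ∃ m : ℕ, ∀ l ≤ k, ∀ i j : Fin n, i ≠ j →
      δ < dist (T^[m + l] (x i)) (T^[m + l] (x j))

def WeaklyMixing (T : X → X) : Prop :=
  IsTransitiveSys (fun p : X × X => (T p.1, T p.2))

def TopologicallyErgodic (T : X → X) : Prop :=
  ∀ U V : Set X, IsOpen U → U.Nonempty → IsOpen V → V.Nonempty →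
    Syndetic {m : ℕ | (T^[m] ⁻¹' U ∩ V).Nonempty}

def MeanEquicontinuous (T : X → X) : Prop :=
  ∀ ε > (0:ℝ), ∃ δ > (0:ℝ), ∀ x y : X, dist x y < δ →
    Filter.limsup (fun m : ℕ => (∑ k ∈ Finset.range m, dist (T^[k] x) (T^[k] y)) / m) atTop < ε

def BanachProximal (T : X → X) (x y : X) : Prop :=
  ∀ ε > (0:ℝ), ubd {m : ℕ | ε ≤ dist (T^[m] x) (T^[m] y)} = 0

def EquicontinuousSys (T : X → X) : Prop :=
  ∀ ε > (0:ℝ), ∃ δ > (0:ℝ), ∀ x y : X, dist x y < δ → ∀ n : ℕ, dist (T^[n] x) (T^[n] y) < ε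

noncomputable def measSupp {Z : Type} [MetricSpace Z] [MeasurableSpace Z] (T : Z → Z) : Set Z :=
  closure (⋃ μ ∈ {μ : Measure Z | IsProbabilityMeasure μ ∧
      ∀ s : Set Z, MeasurableSet s → μ (T ⁻¹' s) = μ s},
    {x : Z | ∀ U : Set Z, IsOpen U → x ∈ U → 0 < μ U})

set_option linter.unusedSectionVars false
set_option linter.unusedVariables false
set_option maxHeartbeats 1000000

lemma aux_iterate_mem_orbit (T : X → X) (x : X) (t : ℕ) : T^[t] x ∈ orbit T x := ⟨t, rfl⟩

lemma aux_orbit_mapsTo (T : X → X) (x : X) : Set.MapsTo T (orbit T x) (orbit T x) := by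
  rintro y ⟨t, rfl⟩
  exact ⟨t + 1, Function.iterate_succ_apply' T t x⟩

lemma aux_syndetic_mono {A B : Set ℕ} (h : A ⊆ B) (hA : Syndetic A) : Syndetic B := by
  obtain ⟨N, hN⟩ := hA
  exact ⟨N, fun k => (hN k).imp fun j hj => ⟨h hj.1, hj.2⟩⟩

lemma aux_minimal_syndetic_return [CompactSpace X] {T : X → X} (hT : Continuous T)
    {p : X} (hp : MinimalPoint T p) {W : Set X} (hW : IsOpen W) (hpW : p ∈ W) :
    Syndetic {t : ℕ | T^[t] p ∈ W} := by
  have hM : IsCompact (closure (orbit T p)) := isClosed_closure.isCompact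
  have hcover : closure (orbit T p) ⊆ ⋃ t : ℕ, (T^[t]) ⁻¹' W := by
    intro y hy
    have h2 := hp y hy
    rw [_root_.mem_closure_iff] at h2
    obtain ⟨w, hwW, t, rfl⟩ := h2 W hW hpW
    exact Set.mem_iUnion.2 ⟨t, hwW⟩
  obtain ⟨s, hs⟩ := hM.elim_finite_subcover _
    (fun t : ℕ => (hT.iterate t).isOpen_preimage W hW) hcover
  refine ⟨s.sup id, fun k => ?_⟩
  have hk : T^[k] p ∈ closure (orbit T p) := subset_closure (aux_iterate_mem_orbit T p k)
  obtain ⟨t, ht, htW⟩ := Set.mem_iUnion₂.1 (hs hk)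
  refine ⟨t + k, ?_, Nat.le_add_left k t, ?_⟩
  · show T^[t + k] p ∈ W
    rw [Function.iterate_add_apply]
    exact htW
  · have h3 : t ≤ s.sup id := Finset.le_sup (f := id) ht
    omega

lemma aux_prodMap_iterate {n : ℕ} (T : X → X) (t : ℕ) (y : Fin n → X) (i : Fin n) :
    (prodMap T n)^[t] y i = T^[t] (y i) := by
  induction t generalizing y with
  | zero => rfl
  | succ t ih =>
    rw [Function.iterate_succ_apply, Function.iterate_succ_apply]
    exact ih _

lemma aux_prodMap_cont {n : ℕ} {T : X → X} (hT : Continuous T) : Continuous (prodMap T n) :=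
  continuous_pi fun i => hT.comp (continuous_apply i)

lemma aux_exists_minimal_subset {Z : Type} [MetricSpace Z] [CompactSpace Z] {F : Z → Z}
    {Y : Set Z} (hYne : Y.Nonempty) (hYc : IsClosed Y) (hYi : Set.MapsTo F Y Y) :
    ∃ K ⊆ Y, K.Nonempty ∧ IsClosed K ∧ Set.MapsTo F K K ∧
      ∀ K' ⊆ K, K'.Nonempty → IsClosed K' → Set.MapsTo F K' K' → K' = K := by
  set S : Set (Set Z) := {K | K.Nonempty ∧ IsClosed K ∧ Set.MapsTo F K K} with hS
  have hchain : ∀ c ⊆ S, IsChain (fun x1 x2 => x1 ⊆ x2) c → c.Nonempty →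
      ∃ lb ∈ S, ∀ s ∈ c, lb ⊆ s := by
    intro c hcS hch hcne
    have hne : Nonempty c := hcne.to_subtype
    have hdir : Directed (fun x1 x2 : Set Z => x1 ⊇ x2) (fun s : c => (s : Set Z)) := by
      rintro ⟨s, hs⟩ ⟨t, ht⟩
      rcases eq_or_ne s t with rfl | hst
      · exact ⟨⟨s, hs⟩, Set.Subset.refl s, Set.Subset.refl s⟩
      rcases hch hs ht hst with h | h
      · exact ⟨⟨s, hs⟩, Set.Subset.refl s, h⟩
      · exact ⟨⟨t, ht⟩, h, Set.Subset.refl t⟩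
    have hnei : (⋂ s : c, (s : Set Z)).Nonempty :=
      IsCompact.nonempty_iInter_of_directed_nonempty_isCompact_isClosed _ hdir
        (fun s => (hcS s.2).1) (fun s => (hcS s.2).2.1.isCompact) (fun s => (hcS s.2).2.1)
    have heq : ⋂₀ c = ⋂ s : c, (s : Set Z) := Set.sInter_eq_iInter
    refine ⟨⋂₀ c, ⟨?_, ?_, ?_⟩, fun s hs => Set.sInter_subset_of_mem hs⟩
    · rw [heq]; exact hnei
    · exact isClosed_sInter fun s hs => (hcS hs).2.1
    · intro z hz
      rw [Set.mem_sInter] at hz ⊢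
      exact fun s hs => (hcS hs).2.2 (hz s hs)
  obtain ⟨K, hKY, hKmin⟩ := zorn_superset_nonempty S hchain Y ⟨hYne, hYc, hYi⟩
  exact ⟨K, hKY, hKmin.1.1, hKmin.1.2.1, hKmin.1.2.2,
    fun K' h1 h2 h3 h4 => Set.Subset.antisymm h1 (hKmin.2 ⟨h2, h3, h4⟩ h1)⟩

lemma aux_minimal_subset_coord [CompactSpace X] {T : X → X} (hT : Continuous T) {n : ℕ}
    {K : Set (Fin n → X)} (hKc : IsClosed K)
    (hKi : Set.MapsTo (prodMap T n) K K)
    (hKmin : ∀ K' ⊆ K, K'.Nonempty → IsClosed K' → Set.MapsTo (prodMap T n) K' K' → K' = K)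
    {w : Fin n → X} (hw : w ∈ K) (i : Fin n) : MinimalPoint T (w i) := by
  have hA : ∀ v ∈ K, closure (orbit (prodMap T n) v) = K := by
    intro v hv
    refine hKmin _ ?_ ⟨v, subset_closure ⟨0, rfl⟩⟩ isClosed_closure
      ((aux_orbit_mapsTo _ v).closure (aux_prodMap_cont hT))
    refine hKc.closure_subset_iff.2 ?_
    rintro _ ⟨t, rfl⟩
    exact (hKi.iterate t) hv
  intro y hy
  obtain ⟨g, hg, hgy⟩ := mem_closure_iff_seq_limit.1 hy
  choose sk hsk using hg
  have humem : ∀ k, (prodMap T n)^[sk k] w ∈ K := fun k => (hKi.iterate (sk k)) hw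
  obtain ⟨v, hvK, φ, hφ, hlim⟩ := (hKc.isCompact).tendsto_subseq humem
  have hvi : v i = y := by
    have h1 : Tendsto (fun k => (prodMap T n)^[sk (φ k)] w i) atTop (𝓝 (v i)) :=
      ((continuous_apply i).tendsto v).comp hlim
    have h2 : Tendsto (fun k => (prodMap T n)^[sk (φ k)] w i) atTop (𝓝 y) := by
      have : (fun k => (prodMap T n)^[sk (φ k)] w i) = g ∘ φ := by
        funext k
        rw [aux_prodMap_iterate]
        exact hsk (φ k)
      rw [this]
      exact hgy.comp hφ.tendsto_atTop
    exact tendsto_nhds_unique h1 h2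
  have hwc : w ∈ closure (orbit (prodMap T n) v) := (hA v hvK).symm ▸ hw
  have hproj : w i ∈ closure (orbit T (v i)) := by
    have h2 := image_closure_subset_closure_image
      (f := fun y : Fin n → X => y i) (s := orbit (prodMap T n) v) (continuous_apply i)
    have h3 : (fun y : Fin n → X => y i) '' (orbit (prodMap T n) v) ⊆ orbit T (v i) := by
      rintro _ ⟨_, ⟨t, rfl⟩, rfl⟩
      exact ⟨t, (aux_prodMap_iterate T t v i).symm⟩
    exact (closure_mono h3) (h2 ⟨w, hwc, rfl⟩)
  rwa [hvi] at hproj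

lemma aux_minimal_point_periodic {T : X → X} {x : X} (hx : MinimalPoint T x)
    (hfin : (orbit T x).Finite) : ∃ c : ℕ, 0 < c ∧ T^[c] x = x := by
  have hsub : orbit T (T x) ⊆ orbit T x := by
    rintro _ ⟨t, rfl⟩
    refine ⟨t + 1, ?_⟩
    show T^[t+1] x = T^[t] (T x)
    rw [Function.iterate_succ_apply]
  have hfin2 : (orbit T (T x)).Finite := hfin.subset hsub
  have hclos : closure (orbit T (T x)) = orbit T (T x) := hfin2.isClosed.closure_eq
  have hmem : T x ∈ closure (orbit T x) := subset_closure ⟨1, by simp⟩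
  have := hx (T x) hmem
  rw [hclos] at this
  obtain ⟨t, ht⟩ := this
  exact ⟨t + 1, Nat.succ_pos t, by rwa [Function.iterate_add_apply, Function.iterate_one]⟩

lemma aux_orbit_inj_of_infinite {T : X → X} {p : X} (hinf : (closure (orbit T p)).Infinite)
    {a b : ℕ} (hab : T^[a] p = T^[b] p) (h : a < b) : False := by
  have key : ∀ s, a ≤ s → T^[s + (b - a)] p = T^[s] p := by
    intro s hs
    have h1 : s + (b - a) = (s - a) + b := by omega
    have h2 : (s - a) + a = s := by omega
    rw [h1, Function.iterate_add_apply, ← hab, ← Function.iterate_add_apply, h2]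
  have horb : orbit T p ⊆ (fun s => T^[s] p) '' (Set.Iio b) := by
    rintro _ ⟨t, rfl⟩
    induction t using Nat.strong_induction_on with
    | _ t ih =>
      rcases lt_or_ge t b with h' | h'
      · exact ⟨t, h', rfl⟩
      · have heq : T^[t] p = T^[t - (b - a)] p := by
          have h5 := key (t - (b - a)) (by omega)
          rw [← h5]
          congr 1
          omega
        show T^[t] p ∈ _
        rw [heq]
        exact ih (t - (b - a)) (by omega)
  have hfin : ((fun s => T^[s] p) '' (Set.Iio b)).Finite := (Set.finite_Iio b).image _
  exact hinf (hfin.subset (closure_minimal horb hfin.isClosed))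

lemma aux_pairMap_iterate (T : X → X) (t : ℕ) (p : X × X) :
    (fun p : X × X => (T p.1, T p.2))^[t] p = (T^[t] p.1, T^[t] p.2) := by
  induction t generalizing p with
  | zero => rfl
  | succ t ih =>
    rw [Function.iterate_succ_apply, Function.iterate_succ_apply, Function.iterate_succ_apply]
    exact ih _

lemma aux_wm_hit {T : X → X} (hwm : WeaklyMixing T) {A B : Set X}
    (hA : IsOpen A) (hAne : A.Nonempty) (hB : IsOpen B) (hBne : B.Nonempty) :
    ∃ m, (A ∩ T^[m] ⁻¹' B).Nonempty := by
  obtain ⟨m, hm⟩ :=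
    (hwm (A ×ˢ A) (B ×ˢ B) (hA.prod hA) (hAne.prod hAne) (hB.prod hB) (hBne.prod hBne)).nonempty
  obtain ⟨⟨a, b⟩, hab, hpre⟩ := hm
  rw [Set.mem_preimage, aux_pairMap_iterate] at hpre
  exact ⟨m, a, hab.1, hpre.1⟩

lemma aux_wm_pair {T : X → X} (hT : Continuous T) (hwm : WeaklyMixing T) {A1 B1 A2 B2 : Set X}
    (h1 : IsOpen A1) (h1n : A1.Nonempty) (h2 : IsOpen B1) (h2n : B1.Nonempty)
    (h3 : IsOpen A2) (h3n : A2.Nonempty) (h4 : IsOpen B2) (h4n : B2.Nonempty) :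
    ∃ A' B' : Set X, IsOpen A' ∧ A'.Nonempty ∧ IsOpen B' ∧ B'.Nonempty ∧
      ∀ m, (A' ∩ T^[m] ⁻¹' B').Nonempty →
        (A1 ∩ T^[m] ⁻¹' B1).Nonempty ∧ (A2 ∩ T^[m] ⁻¹' B2).Nonempty := by
  obtain ⟨k, hk⟩ :=
    (hwm (A1 ×ˢ B1) (A2 ×ˢ B2) (h1.prod h2) (h1n.prod h2n) (h3.prod h4) (h3n.prod h4n)).nonempty
  obtain ⟨⟨a, b⟩, hab, hpre⟩ := hk
  rw [Set.mem_preimage, aux_pairMap_iterate] at hpre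
  refine ⟨A1 ∩ T^[k] ⁻¹' A2, B1 ∩ T^[k] ⁻¹' B2,
    h1.inter ((hT.iterate k).isOpen_preimage _ h3), ⟨a, hab.1, hpre.1⟩,
    h2.inter ((hT.iterate k).isOpen_preimage _ h4), ⟨b, hab.2, hpre.2⟩, ?_⟩
  rintro m ⟨x, ⟨hxA1, hxA2⟩, hxB⟩
  rw [Set.mem_preimage] at hxB
  obtain ⟨hxB1, hxB2⟩ := hxB
  refine ⟨⟨x, hxA1, hxB1⟩, ⟨T^[k] x, hxA2, ?_⟩⟩
  show T^[m] (T^[k] x) ∈ B2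
  have hcomm : T^[m] (T^[k] x) = T^[k] (T^[m] x) := by
    rw [← Function.iterate_add_apply, ← Function.iterate_add_apply, Nat.add_comm]
  rw [hcomm]
  exact hxB2

lemma aux_wm_list {T : X → X} (hT : Continuous T) (hwm : WeaklyMixing T) [Nonempty X] :
    ∀ L : List (Set X × Set X),
      (∀ p ∈ L, IsOpen p.1 ∧ p.1.Nonempty ∧ IsOpen p.2 ∧ p.2.Nonempty) →
    ∃ A' B' : Set X, IsOpen A' ∧ A'.Nonempty ∧ IsOpen B' ∧ B'.Nonempty ∧
      ∀ m, (A' ∩ T^[m] ⁻¹' B').Nonempty → ∀ p ∈ L, (p.1 ∩ T^[m] ⁻¹' p.2).Nonempty := by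
  intro L
  induction L with
  | nil =>
    intro _
    exact ⟨Set.univ, Set.univ, isOpen_univ, Set.univ_nonempty, isOpen_univ, Set.univ_nonempty,
      fun m _ p hp => absurd hp List.not_mem_nil⟩
  | cons p L ih =>
    intro h
    obtain ⟨A0, B0, hA0, hA0n, hB0, hB0n, h0⟩ := ih fun q hq => h q (List.mem_cons_of_mem p hq)
    obtain ⟨hp1, hp1n, hp2, hp2n⟩ := h p List.mem_cons_self
    obtain ⟨A', B', hA', hA'n, hB', hB'n, himp⟩ :=
      aux_wm_pair hT hwm hp1 hp1n hp2 hp2n hA0 hA0n hB0 hB0n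
    refine ⟨A', B', hA', hA'n, hB', hB'n, fun m hm q hq => ?_⟩
    rcases List.mem_cons.1 hq with rfl | hq'
    · exact (himp m hm).1
    · exact h0 m (himp m hm).2 q hq'

lemma aux_wm_simul {T : X → X} (hT : Continuous T) (hwm : WeaklyMixing T) {n : ℕ}
    {U : Set X} (hU : IsOpen U) (hUn : U.Nonempty) {V : Fin n → Set X}
    (hV : ∀ i, IsOpen (V i) ∧ (V i).Nonempty) :
    ∃ m, ∃ x : Fin n → X, ∀ i, x i ∈ U ∧ T^[m] (x i) ∈ V i := by
  have : Nonempty X := ⟨hUn.choose⟩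
  have hLmem : ∀ p ∈ (List.ofFn fun i => (U, V i)),
      IsOpen p.1 ∧ p.1.Nonempty ∧ IsOpen p.2 ∧ p.2.Nonempty := by
    intro p hp
    rw [List.mem_ofFn] at hp
    obtain ⟨i, rfl⟩ := hp
    exact ⟨hU, hUn, (hV i).1, (hV i).2⟩
  obtain ⟨A', B', hA', hA'n, hB', hB'n, himp⟩ :=
    aux_wm_list hT hwm (List.ofFn fun i => (U, V i)) hLmem
  obtain ⟨m, hm⟩ := aux_wm_hit hwm hA' hA'n hB' hB'n
  have hi : ∀ i : Fin n, (U ∩ T^[m] ⁻¹' V i).Nonempty := by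
    intro i
    exact himp m hm (U, V i) (by rw [List.mem_ofFn]; exact ⟨i, rfl⟩)
  choose x hx using hi
  exact ⟨m, x, fun i => ⟨(hx i).1, (hx i).2⟩⟩

lemma aux_exists_rec_tuple [CompactSpace X] {T : X → X} (hT : Continuous T)
    {n : ℕ} (x : Fin n → X) (hinj : Function.Injective x)
    (hmin : ∀ i, MinimalPoint T (x i)) :
    ∃ q : Fin n → X, Function.Injective q ∧
      ∀ ε > (0:ℝ), Syndetic {t | ∀ i, dist (T^[t] (q i)) (q i) < ε} := by
  by_cases hcase : ∃ i, (closure (orbit T (x i))).Infinite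
  · obtain ⟨i0, hinf⟩ := hcase
    set p := x i0 with hp
    refine ⟨fun j => T^[(j : ℕ)] p, ?_, ?_⟩
    · intro a b hab2
      by_contra hne
      have hne' : (a : ℕ) ≠ (b : ℕ) := fun h => hne (Fin.ext h)
      rcases Nat.lt_or_ge (a : ℕ) (b : ℕ) with h | h
      · exact aux_orbit_inj_of_infinite hinf hab2 h
      · exact aux_orbit_inj_of_infinite hinf hab2.symm (by omega)
    · intro ε hε
      have hWo : IsOpen (⋂ j : Fin n, (T^[(j : ℕ)]) ⁻¹' Metric.ball (T^[(j : ℕ)] p) ε) :=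
        isOpen_iInter_of_finite fun j => (hT.iterate _).isOpen_preimage _ Metric.isOpen_ball
      have hpW : p ∈ ⋂ j : Fin n, (T^[(j : ℕ)]) ⁻¹' Metric.ball (T^[(j : ℕ)] p) ε :=
        Set.mem_iInter.2 fun j => Metric.mem_ball_self hε
      have hsyn := aux_minimal_syndetic_return hT (hmin i0) hWo hpW
      refine aux_syndetic_mono ?_ hsyn
      intro t ht j
      have h2 := Set.mem_iInter.1 ht j
      rw [Set.mem_preimage, Metric.mem_ball] at h2
      have hcomm : T^[t] (T^[(j : ℕ)] p) = T^[(j : ℕ)] (T^[t] p) := by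
        rw [← Function.iterate_add_apply, ← Function.iterate_add_apply, Nat.add_comm]
      show dist (T^[t] (T^[(j : ℕ)] p)) (T^[(j : ℕ)] p) < ε
      rw [hcomm]
      exact h2
  · push_neg at hcase
    have hper : ∀ i, ∃ c, 0 < c ∧ T^[c] (x i) = x i := fun i =>
      aux_minimal_point_periodic (hmin i) ((hcase i).subset subset_closure)
    choose c hc hcx using hper
    set P := ∏ i, c i with hPdef
    have hP : 0 < P := Finset.prod_pos fun i _ => hc i
    have hfix : ∀ (i : Fin n) (r : ℕ), T^[P * r] (x i) = x i := by
      intro i r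
      obtain ⟨k, hk⟩ : c i ∣ P := Finset.dvd_prod_of_mem c (Finset.mem_univ i)
      have h1 : Function.IsPeriodicPt T (c i) (x i) := hcx i
      have h2 := h1.mul_const (k * r)
      have h3 : c i * (k * r) = P * r := by rw [hk]; ring
      rw [h3] at h2
      exact h2
    refine ⟨x, hinj, fun ε hε => ⟨P, fun k => ?_⟩⟩
    refine ⟨P * (k / P + 1), ?_, ?_, ?_⟩
    · intro i
      show dist (T^[P * (k / P + 1)] (x i)) (x i) < ε
      rw [hfix i (k / P + 1), dist_self]
      exact hε
    · calc k = P * (k / P) + k % P := (Nat.div_add_mod k P).symm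
        _ ≤ P * (k / P) + P := Nat.add_le_add_left (le_of_lt (Nat.mod_lt k hP)) _
        _ = P * (k / P + 1) := (Nat.mul_succ P _).symm
    · calc P * (k / P + 1) = P * (k / P) + P := Nat.mul_succ P _
        _ = k / P * P + P := by rw [Nat.mul_comm]
        _ ≤ k + P := Nat.add_le_add_right (Nat.div_mul_le_self k P) P

lemma aux_backward [CompactSpace X] {T : X → X} (hT : Continuous T) (hwm : WeaklyMixing T)
    {n : ℕ} (hn : 2 ≤ n) (x : Fin n → X) (hinj : Function.Injective x)
    (hmin : ∀ i, MinimalPoint T (x i)) : BrokenSensitive T Fps n := by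
  obtain ⟨q, hqinj, hsyn⟩ := aux_exists_rec_tuple hT x hinj hmin
  -- minimum pairwise distance
  have hone : (⟨0, by omega⟩ : Fin n) ≠ (⟨1, by omega⟩ : Fin n) := by
    intro h
    rw [Fin.ext_iff] at h
    simp at h
  have hsne : (Finset.univ.offDiag : Finset (Fin n × Fin n)).Nonempty :=
    ⟨(⟨0, by omega⟩, ⟨1, by omega⟩),
      Finset.mem_offDiag.2 ⟨Finset.mem_univ _, Finset.mem_univ _, hone⟩⟩
  set c : ℝ := Finset.univ.offDiag.inf' hsne (fun p : Fin n × Fin n => dist (q p.1) (q p.2))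
    with hcdef
  have hcpos : 0 < c := by
    rw [hcdef, Finset.lt_inf'_iff]
    rintro ⟨i, j⟩ hij
    rw [Finset.mem_offDiag] at hij
    exact dist_pos.2 fun h => hij.2.2 (hqinj h)
  have hcle : ∀ i j : Fin n, i ≠ j → c ≤ dist (q i) (q j) := by
    intro i j hij
    have hmem : (i, j) ∈ (Finset.univ.offDiag : Finset (Fin n × Fin n)) :=
      Finset.mem_offDiag.2 ⟨Finset.mem_univ i, Finset.mem_univ j, hij⟩
    exact Finset.inf'_le (fun p : Fin n × Fin n => dist (q p.1) (q p.2)) hmem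
  set ε : ℝ := c / 8 with hεdef
  have hε : 0 < ε := by positivity
  set B : Set ℕ := {t | ∀ i, dist (T^[t] (q i)) (q i) < ε} with hBdef
  have hBsyn : Syndetic B := hsyn ε hε
  refine ⟨c / 4, by positivity, B, ⟨Set.univ, B, fun l => ⟨0, Set.subset_univ _⟩, hBsyn,
    (Set.univ_inter B).symm⟩, ?_⟩
  intro U hUo hUne l
  set V : Fin n → Set X := fun i =>
    ⋂ k ∈ Finset.range (l + 1), (T^[k]) ⁻¹' Metric.ball (T^[k] (q i)) ε with hVdef
  have hV : ∀ i, IsOpen (V i) ∧ (V i).Nonempty := by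
    intro i
    constructor
    · exact isOpen_biInter_finset fun k _ => (hT.iterate k).isOpen_preimage _ Metric.isOpen_ball
    · refine ⟨q i, ?_⟩
      rw [hVdef]
      simp only [Set.mem_iInter]
      intro k _
      exact Metric.mem_ball_self hε
  obtain ⟨m, y, hy⟩ := aux_wm_simul hT hwm hUo hUne hV
  refine ⟨y, fun i => (hy i).1, m, ?_⟩
  rintro k ⟨hkB, hk1, hkl⟩ i j hij
  have hBk : ∀ i', dist (T^[k] (q i')) (q i') < ε := hkB
  have hVy : ∀ i', dist (T^[k] (T^[m] (y i'))) (T^[k] (q i')) < ε := by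
    intro i'
    have h2 := (hy i').2
    rw [hVdef] at h2
    simp only [Set.mem_iInter] at h2
    have h3 := h2 k (Finset.mem_range.2 (by omega))
    rwa [Set.mem_preimage, Metric.mem_ball] at h3
  have hiter : ∀ i', T^[m + k] (y i') = T^[k] (T^[m] (y i')) := by
    intro i'
    rw [← Function.iterate_add_apply, Nat.add_comm]
  have h1 : c ≤ dist (q i) (q j) := hcle i j hij
  have h2 : dist (q i) (q j) ≤
      dist (q i) (T^[k] (q i)) + dist (T^[k] (q i)) (T^[k] (q j)) + dist (T^[k] (q j)) (q j) :=
    dist_triangle4 _ _ _ _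
  have h3 : dist (T^[k] (q i)) (T^[k] (q j)) ≤
      dist (T^[k] (q i)) (T^[m + k] (y i)) + dist (T^[m + k] (y i)) (T^[m + k] (y j)) +
        dist (T^[m + k] (y j)) (T^[k] (q j)) := dist_triangle4 _ _ _ _
  have h4 : dist (q i) (T^[k] (q i)) < ε := by rw [dist_comm]; exact hBk i
  have h5 : dist (T^[k] (q j)) (q j) < ε := hBk j
  have h6 : dist (T^[k] (q i)) (T^[m + k] (y i)) < ε := by
    rw [dist_comm, hiter i]; exact hVy i
  have h7 : dist (T^[m + k] (y j)) (T^[k] (q j)) < ε := by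
    rw [hiter j]; exact hVy j
  have hε8 : ε = c / 8 := hεdef
  linarith

lemma aux_forward [CompactSpace X] {T : X → X} (hT : Continuous T) (hne : Nonempty X)
    {n : ℕ} (hbs : BrokenSensitive T Fps n) :
    ∃ x : Fin n → X, Function.Injective x ∧ ∀ i, MinimalPoint T (x i) := by
  obtain ⟨δ, hδ, F₀, hF₀, hmain⟩ := hbs
  obtain ⟨A, B, hA, hB, rfl⟩ := hF₀
  obtain ⟨N, hBN⟩ := hB
  have pm_cont : Continuous (prodMap T n) := aux_prodMap_cont hT
  -- Step 1: for each L, a tuple with separated times in every length-N window of [0, L-N]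
  have key : ∀ L : ℕ, ∃ z : Fin n → X, ∀ s : ℕ, s + N ≤ L →
      ∃ t, s ≤ t ∧ t ≤ s + N ∧ ∀ i j : Fin n, i ≠ j →
        δ < dist (T^[t] (z i)) (T^[t] (z j)) := by
    intro L
    obtain ⟨a0, ha0⟩ := hA (L + 1)
    set a := a0 + 1 with ha
    have haA : Set.Icc a (a + L) ⊆ A := by
      intro u hu
      obtain ⟨h1, h2⟩ := hu
      exact ha0 ⟨by omega, by omega⟩
    obtain ⟨x, hxU, m, hsep⟩ := hmain Set.univ isOpen_univ Set.univ_nonempty (a + L)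
    refine ⟨fun i => T^[m + a] (x i), ?_⟩
    intro s hs
    obtain ⟨j, hjB, hj1, hj2⟩ := hBN (a + s)
    refine ⟨j - a, by omega, by omega, ?_⟩
    intro i i' hii'
    have hjF : j ∈ (A ∩ B) ∩ Set.Icc 1 (a + L) := by
      refine ⟨⟨haA ⟨by omega, by omega⟩, hjB⟩, by omega, by omega⟩
    have h4 := hsep j hjF i i' hii'
    have he : ∀ v : X, T^[j - a] (T^[m + a] v) = T^[m + j] v := by
      intro v
      rw [← Function.iterate_add_apply]
      congr 1
      omega
    rw [he, he]
    exact h4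
  choose z hz using key
  -- Step 2: limit tuple
  obtain ⟨zl, -, φ, hφ, hlim⟩ :=
    (isCompact_univ (X := Fin n → X)).tendsto_subseq (fun L => Set.mem_univ (z L))
  set D : Set (Fin n → X) := {w | ∀ i j : Fin n, i ≠ j → δ ≤ dist (w i) (w j)} with hDdef
  have hDc : IsClosed D := by
    have hDeq : D = ⋂ (i : Fin n), ⋂ (j : Fin n),
        {w : Fin n → X | i ≠ j → δ ≤ dist (w i) (w j)} := by
      ext w
      simp only [hDdef, Set.mem_setOf_eq, Set.mem_iInter]
    rw [hDeq]
    refine isClosed_iInter fun i => isClosed_iInter fun j => ?_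
    by_cases hij : i = j
    · subst hij
      have : {w : Fin n → X | i ≠ i → δ ≤ dist (w i) (w i)} = Set.univ := by
        ext w; simp
      rw [this]
      exact isClosed_univ
    · have : {w : Fin n → X | i ≠ j → δ ≤ dist (w i) (w j)} =
          {w : Fin n → X | δ ≤ dist (w i) (w j)} := by
        ext w; simp [hij]
      rw [this]
      exact isClosed_le continuous_const ((continuous_apply i).dist (continuous_apply j))
  -- Step 3: the limit tuple has separated times in every window
  have hstar : ∀ s : ℕ, ∃ t, s ≤ t ∧ t ≤ s + N ∧ (prodMap T n)^[t] zl ∈ D := by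
    intro s
    have hev : ∀ᶠ k in atTop, ∃ t ∈ Finset.Icc s (s + N), ∀ i j : Fin n, i ≠ j →
        δ < dist (T^[t] (z (φ k) i)) (T^[t] (z (φ k) j)) := by
      filter_upwards [eventually_ge_atTop (s + N)] with k hk
      obtain ⟨t, ht1, ht2, ht3⟩ := hz (φ k) s (le_trans hk hφ.le_apply)
      exact ⟨t, Finset.mem_Icc.2 ⟨ht1, ht2⟩, ht3⟩
    have hfreq : ∃ t ∈ Finset.Icc s (s + N), ∃ᶠ k in atTop, ∀ i j : Fin n, i ≠ j →
        δ < dist (T^[t] (z (φ k) i)) (T^[t] (z (φ k) j)) := by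
      by_contra hcon
      push_neg at hcon
      have hev2 : ∀ᶠ k in atTop, ∀ t ∈ Finset.Icc s (s + N), ¬ (∀ i j : Fin n, i ≠ j →
          δ < dist (T^[t] (z (φ k) i)) (T^[t] (z (φ k) j))) :=
        (eventually_all_finset _).2 fun t ht => (hcon t ht).mono fun k ⟨i, j, hij, hle⟩ hall => absurd (hall i j hij) (not_lt.2 hle)
      obtain ⟨k, hk1, hk2⟩ := (hev.and hev2).exists
      obtain ⟨t, ht, htP⟩ := hk1
      exact hk2 t ht htP
    obtain ⟨t, ht, hfr⟩ := hfreq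
    refine ⟨t, (Finset.mem_Icc.1 ht).1, (Finset.mem_Icc.1 ht).2, ?_⟩
    have htend : Tendsto (fun k => (prodMap T n)^[t] (z (φ k))) atTop
        (𝓝 ((prodMap T n)^[t] zl)) := ((pm_cont.iterate t).tendsto _).comp hlim
    refine hDc.closure_subset (mem_closure_of_frequently_of_tendsto ?_ htend)
    refine hfr.mono fun k hk => ?_
    intro i j hij
    rw [aux_prodMap_iterate, aux_prodMap_iterate]
    exact le_of_lt (hk i j hij)
  -- Step 4: every point of the orbit closure of zl reaches D within N steps
  have hY2 : ∀ y ∈ closure (orbit (prodMap T n) zl),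
      ∃ u, u ≤ N ∧ (prodMap T n)^[u] y ∈ D := by
    intro y hy
    obtain ⟨g, hg, hgy⟩ := mem_closure_iff_seq_limit.1 hy
    choose sk hsk using hg
    have hex : ∀ k : ℕ, ∃ u, u ≤ N ∧ (prodMap T n)^[u + sk k] zl ∈ D := by
      intro k
      obtain ⟨t, ht1, ht2, ht3⟩ := hstar (sk k)
      refine ⟨t - sk k, by omega, ?_⟩
      rwa [show t - sk k + sk k = t by omega]
    choose u hu hud using hex
    have hfreq : ∃ v ∈ Finset.range (N + 1), ∃ᶠ k in atTop, u k = v := by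
      by_contra hcon
      push_neg at hcon
      have hev2 : ∀ᶠ k in atTop, ∀ v ∈ Finset.range (N + 1), ¬ u k = v :=
        (eventually_all_finset _).2 fun v hv => hcon v hv
      obtain ⟨k, hk⟩ := hev2.exists
      exact hk (u k) (Finset.mem_range.2 (Nat.lt_succ_of_le (hu k))) rfl
    obtain ⟨v, hv, hfr⟩ := hfreq
    refine ⟨v, Nat.lt_succ_iff.1 (Finset.mem_range.1 hv), ?_⟩
    have htend : Tendsto (fun k => (prodMap T n)^[v] (g k)) atTop
        (𝓝 ((prodMap T n)^[v] y)) := ((pm_cont.iterate v).tendsto _).comp hgy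
    refine hDc.closure_subset (mem_closure_of_frequently_of_tendsto ?_ htend)
    refine hfr.mono fun k hk => ?_
    show (prodMap T n)^[v] (g k) ∈ D
    rw [← hsk k, ← Function.iterate_add_apply, ← hk]
    exact hud k
  -- Step 5: minimal subset
  have hYne : (closure (orbit (prodMap T n) zl)).Nonempty :=
    ⟨zl, subset_closure ⟨0, rfl⟩⟩
  have hYi : Set.MapsTo (prodMap T n) (closure (orbit (prodMap T n) zl))
      (closure (orbit (prodMap T n) zl)) := (aux_orbit_mapsTo _ zl).closure pm_cont
  obtain ⟨K, hKY, hKne, hKc, hKi, hKmin⟩ := aux_exists_minimal_subset hYne isClosed_closure hYi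
  obtain ⟨y0, hy0⟩ := hKne
  obtain ⟨v, hvN, hvD⟩ := hY2 y0 (hKY hy0)
  have hwK : (prodMap T n)^[v] y0 ∈ K := (hKi.iterate v) hy0
  set w := (prodMap T n)^[v] y0 with hwdef
  have hwD : ∀ i j : Fin n, i ≠ j → δ ≤ dist (w i) (w j) := hvD
  have hwinj : Function.Injective w := by
    intro i j hij
    by_contra hne'
    have h2 := hwD i j hne'
    rw [hij, dist_self] at h2
    linarith
  exact ⟨w, hwinj, fun i => aux_minimal_subset_coord hT hKc hKi hKmin hwK i⟩

theorem stmt14 [CompactSpace X] (T : X → X) (hT : Continuous T) (hTs : Function.Surjective T)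
    (hwm : WeaklyMixing T) (hnt : ∃ a b : X, a ≠ b) (n : ℕ) (hn : 2 ≤ n) :
    BrokenSensitive T Fps n ↔
      ∃ x : Fin n → X, Function.Injective x ∧ ∀ i, MinimalPoint T (x i) := by
  have hne : Nonempty X := by
    obtain ⟨a, b, hab⟩ := hnt
    exact ⟨a⟩
  constructor
  · intro hbs
    exact aux_forward hT hne hbs
  · rintro ⟨x, hinj, hmin⟩
    exact aux_backward hT hwm hn x hinj hmin
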